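/- Let p be a prime, n, m, l ≥ 1, R = GR(p^n,m) = (ZMod (p^n))[X]/(f) for a monic basic irreducible f of degree m, ρ ∈ R[X] monic of degree l with reduction modulo (p) irreducible over R/(p), and S = R[X]/(ρ), a free R-module of rank l. Let Tr : S → R denote the trace form Algebra.trace R S. Then for every R-basis b : Fin l → S of S there exists a unique family b* : Fin l → S such that Tr(b*_i · b_j) = 1 if i = j and 0 otherwise; moreover b* is itself an R-basis of S, and every a ∈ S satisfies a = Σ_{i} Tr(b*_i · a) • b_i. -/

import Mathlib

/-!
The Gram matrix of the trace form in the basis `b` has determinant `discr R b`. The ring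
`R = GR(p^n, m)` is local with nilpotent maximal ideal `(p)`, and reducing modulo `p` turns `S`
into a finite, hence separable, extension of the finite field `R/(p)`; since the trace commutes
with this reduction, `discr R b` is a unit modulo `p` and therefore a unit. A unit Gram
determinant makes `x ↦ Tr (x * ·)` an isomorphism `S ≃ Hom_R(S, R)`, and the dual family is the
preimage of the coordinate functionals of `b`.
-/

open Polynomial Module Matrix IsLocalRing
open LinearMap (BilinForm)

attribute [local instance] Ideal.Quotient.field

namespace LinearMap.BilinForm

variable {R M ι : Type*} [CommRing R] [AddCommGroup M] [Module R M] [Fintype ι] [DecidableEq ι]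
  {B : BilinForm R M}

theorem toMatrix_dualBasis (b : Basis ι R M) (B : BilinForm R M) :
    LinearMap.toMatrix b b.dualBasis B = (BilinForm.toMatrix b B)ᵀ := by
  ext i j
  simp [LinearMap.toMatrix_apply, BilinForm.toMatrix_apply]

variable (b : Basis ι R M) (hB : IsUnit (BilinForm.toMatrix b B).det)

noncomputable def toDualOfIsUnitDet : M ≃ₗ[R] Dual R M :=
  LinearEquiv.ofIsUnitDet (f := B) (v := b) (v' := b.dualBasis)
    (by rwa [toMatrix_dualBasis, det_transpose])

theorem toDualOfIsUnitDet_apply (x : M) : toDualOfIsUnitDet b hB x = B x := rfl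

noncomputable def dualBasisOfIsUnitDet : Basis ι R M :=
  b.dualBasis.map (toDualOfIsUnitDet b hB).symm

theorem apply_dualBasisOfIsUnitDet_left (i : ι) (x : M) :
    B (dualBasisOfIsUnitDet b hB i) x = b.repr x i := by
  rw [dualBasisOfIsUnitDet, Basis.map_apply, ← toDualOfIsUnitDet_apply b hB,
    LinearEquiv.apply_symm_apply, Basis.dualBasis_apply]

theorem eq_dualBasisOfIsUnitDet {v : ι → M}
    (hv : ∀ i j, B (v i) (b j) = if i = j then 1 else 0) :
    v = dualBasisOfIsUnitDet b hB := by
  funext i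
  rw [dualBasisOfIsUnitDet, Basis.map_apply, LinearEquiv.eq_symm_apply]
  refine b.ext fun j => ?_
  rw [toDualOfIsUnitDet_apply, hv, Basis.dualBasis_apply, b.repr_self,
    Finsupp.single_eq_pi_single, Pi.single_apply]

end LinearMap.BilinForm

namespace Algebra

variable {R S ι : Type*} [CommRing R] [CommRing S] [Algebra R S] [IsLocalRing R]
  [Module.Free R S] [Module.Finite R S] [Fintype ι] [DecidableEq ι]

theorem discr_quotient_mk (b : ι → S) :
    Ideal.Quotient.mk (maximalIdeal R) (discr R b) =
      discr (R ⧸ maximalIdeal R)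
        (Ideal.Quotient.mk ((maximalIdeal R).map (algebraMap R S)) ∘ b) := by
  rw [discr_def, discr_def, RingHom.map_det]
  congr 1
  ext i j
  simp only [RingHom.mapMatrix_apply, Matrix.map_apply, traceMatrix_apply, traceForm_apply,
    Function.comp_apply, ← map_mul, trace_quotient_mk]

theorem isUnit_discr_of_isSeparable_quotient
    [((maximalIdeal R).map (algebraMap R S)).IsMaximal]
    [Algebra.IsSeparable (R ⧸ maximalIdeal R) (S ⧸ (maximalIdeal R).map (algebraMap R S))]
    (b : Basis ι R S) : IsUnit (discr R b) := by
  have := isLocalHom_of_le_jacobson_bot (maximalIdeal R)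
    (jacobson_eq_maximalIdeal ⊥ bot_ne_top).ge
  have hb : Ideal.Quotient.mk _ ∘ b = basisQuotient b :=
    funext fun i => (basisQuotient_apply b i).symm
  rw [← isUnit_map_iff (Ideal.Quotient.mk (maximalIdeal R)), discr_quotient_mk, hb]
  have := Module.Finite.of_basis (basisQuotient b)
  exact discr_isUnit_of_basis _ (basisQuotient b)

end Algebra

theorem IsLocalRing.of_isMaximal_of_le_nilradical {A : Type*} [CommRing A] {I : Ideal A}
    (hI : I.IsMaximal) (hnil : I ≤ nilradical A) : IsLocalRing A :=
  of_unique_max_ideal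
    ⟨I, hI, fun J hJ => (hI.eq_of_le hJ.ne_top (hnil.trans (nilradical_le_prime J))).symm⟩

theorem ZMod.ker_castHom {m k : ℕ} (h : m ∣ k) :
    RingHom.ker (ZMod.castHom h (ZMod m)) = Ideal.span {(m : ZMod k)} := by
  ext x
  rw [RingHom.mem_ker, Ideal.mem_span_singleton]
  constructor
  · intro hx
    obtain ⟨x, rfl⟩ := ZMod.intCast_surjective x
    rw [map_intCast, ZMod.intCast_zmod_eq_zero_iff_dvd] at hx
    obtain ⟨c, rfl⟩ := hx
    exact ⟨c, by push_cast; ring⟩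
  · rintro ⟨c, rfl⟩
    rw [map_mul, map_natCast, ZMod.natCast_self, zero_mul]

theorem isNilpotent_natCast_of_algebra_zmod_pow (A : Type*) [Ring A] (p n : ℕ)
    [Algebra (ZMod (p ^ n)) A] : IsNilpotent (p : A) :=
  ⟨n, by rw [← Nat.cast_pow, ← map_natCast (algebraMap (ZMod (p ^ n)) A), ZMod.natCast_self,
    map_zero]⟩

theorem Polynomial.irreducible_map_quotientMk_ker {A K : Type*} [CommRing A] [CommRing K]
    {φ : A →+* K} (hφ : Function.Surjective φ) {f : A[X]} (hf : Irreducible (f.map φ)) :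
    Irreducible (f.map (Ideal.Quotient.mk (RingHom.ker φ))) := by
  rwa [← MulEquiv.irreducible_iff (mapEquiv (RingHom.quotientKerEquivOfSurjective hφ)),
    mapEquiv_apply, map_map]

namespace AdjoinRoot

theorem isMaximal_map_of_irreducible {A : Type*} [CommRing A] {I : Ideal A} [I.IsMaximal]
    {f : A[X]} (hf : Irreducible (f.map (Ideal.Quotient.mk I))) :
    (I.map (of f)).IsMaximal :=
  Ideal.Quotient.maximal_of_isField _ <|
    (quotAdjoinRootEquivQuotPolynomialQuot I f).toMulEquiv.isField
      ((Ideal.Quotient.maximal_ideal_iff_isField_quotient _).mp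
        (PrincipalIdealRing.isMaximal_of_irreducible hf))

theorem isMaximal_span_natCast_of_irreducible_map_castHom {p n : ℕ} (hp : p.Prime) (hn : 0 < n)
    {f : (ZMod (p ^ n))[X]}
    (hirr : Irreducible (f.map (ZMod.castHom (dvd_pow_self p hn.ne') (ZMod p)))) :
    (Ideal.span {(p : AdjoinRoot f)}).IsMaximal := by
  have : Fact p.Prime := ⟨hp⟩
  have : (RingHom.ker (ZMod.castHom (dvd_pow_self p hn.ne') (ZMod p))).IsMaximal :=
    RingHom.ker_isMaximal_of_surjective _ (ZMod.castHom_surjective _)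
  have h := isMaximal_map_of_irreducible
    (irreducible_map_quotientMk_ker (ZMod.castHom_surjective _) hirr)
  rwa [ZMod.ker_castHom, Ideal.map_span, Set.image_singleton, map_natCast] at h

theorem isUnit_discr_of_irreducible_map {p n : ℕ} (hp : p.Prime) (hn : 0 < n)
    {f : (ZMod (p ^ n))[X]} (hf : f.Monic)
    (hirr : Irreducible (f.map (ZMod.castHom (dvd_pow_self p hn.ne') (ZMod p))))
    {ρ : (AdjoinRoot f)[X]}
    (hρirr : Irreducible (ρ.map (Ideal.Quotient.mk (Ideal.span {(p : AdjoinRoot f)}))))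
    {ι : Type*} [Fintype ι] [DecidableEq ι] (b : Basis ι (AdjoinRoot f) (AdjoinRoot ρ)) :
    IsUnit (Algebra.discr (AdjoinRoot f) b) := by
  have hmax := isMaximal_span_natCast_of_irreducible_map_castHom hp hn hirr
  have : IsLocalRing (AdjoinRoot f) := .of_isMaximal_of_le_nilradical hmax <|
    (Ideal.span_singleton_le_iff_mem _).mpr
      (mem_nilradical.mpr (isNilpotent_natCast_of_algebra_zmod_pow _ p n))
  have : ((maximalIdeal (AdjoinRoot f)).map
      (algebraMap (AdjoinRoot f) (AdjoinRoot ρ))).IsMaximal := by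
    rw [← eq_maximalIdeal hmax, algebraMap_eq]
    exact isMaximal_map_of_irreducible hρirr
  have : NeZero (p ^ n) := ⟨pow_ne_zero n hp.ne_zero⟩
  have : Module.Finite (ZMod (p ^ n)) (AdjoinRoot f) := .of_basis (powerBasis' hf).basis
  have : Finite (AdjoinRoot f) := Module.finite_of_finite (ZMod (p ^ n))
  have : Finite (AdjoinRoot f ⧸ maximalIdeal (AdjoinRoot f)) :=
    .of_surjective _ Ideal.Quotient.mk_surjective
  have : Module.Free (AdjoinRoot f) (AdjoinRoot ρ) := .of_basis b
  have : Module.Finite (AdjoinRoot f) (AdjoinRoot ρ) := .of_basis b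
  exact Algebra.isUnit_discr_of_isSeparable_quotient b

end AdjoinRoot

open Algebra LinearMap.BilinForm in
theorem galois_ring_trace_dual_basis_general (p n l : ℕ) (hp : p.Prime)
    (hn : 0 < n)
    (f : Polynomial (ZMod (p ^ n))) (hf : f.Monic)
    (hirr : Irreducible (f.map (ZMod.castHom (dvd_pow_self p hn.ne') (ZMod p))))
    (ρ : Polynomial (AdjoinRoot f))
    (hρirr : Irreducible
      (ρ.map (Ideal.Quotient.mk (Ideal.span {(p : AdjoinRoot f)}))))
    (b : Module.Basis (Fin l) (AdjoinRoot f) (AdjoinRoot ρ)) :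
    ∃ bs : Fin l → AdjoinRoot ρ,
      (∀ i j, Algebra.trace (AdjoinRoot f) (AdjoinRoot ρ) (bs i * b j) =
        if i = j then 1 else 0) ∧
      (∀ bs' : Fin l → AdjoinRoot ρ,
        (∀ i j, Algebra.trace (AdjoinRoot f) (AdjoinRoot ρ) (bs' i * b j) =
          if i = j then 1 else 0) → bs' = bs) ∧
      (∃ bdual : Module.Basis (Fin l) (AdjoinRoot f) (AdjoinRoot ρ), ∀ i, bdual i = bs i) ∧
      (∀ a : AdjoinRoot ρ,
        a = ∑ i, Algebra.trace (AdjoinRoot f) (AdjoinRoot ρ) (bs i * a) • b i) := by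
  have hB : IsUnit (toMatrix b (traceForm (AdjoinRoot f) (AdjoinRoot ρ))).det := by
    rw [← traceMatrix_of_basis, ← discr_def]
    exact AdjoinRoot.isUnit_discr_of_irreducible_map hp hn hf hirr hρirr b
  have hdual := apply_dualBasisOfIsUnitDet_left b hB
  refine ⟨dualBasisOfIsUnitDet b hB, fun i j => ?_, fun v hv => eq_dualBasisOfIsUnitDet b hB hv,
    ⟨_, fun _ => rfl⟩, fun a => ?_⟩
  · rw [← traceForm_apply, hdual, b.repr_self, Finsupp.single_eq_pi_single, Pi.single_apply]
  · simp only [← traceForm_apply, hdual, b.sum_repr]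

/-- Let `R = GR(p^n, m)` and `S = R[X]/(ρ) = GR(p^n, m*l)`, a free
`R`-module of rank `l`, and let `Tr = Algebra.trace R S`. For every `R`-basis `b` of `S`
there is a unique trace-dual family `b*` with `Tr (b*ᵢ · bⱼ) = δᵢⱼ`; moreover `b*` is itself
an `R`-basis of `S` and every `a ∈ S` satisfies `a = Σᵢ Tr (b*ᵢ · a) • bᵢ`. -/
theorem galois_ring_trace_dual_basis (p n m l : ℕ) (hp : p.Prime)
    (hn : 0 < n) (hm : 0 < m) (hl : 0 < l)
    (f : Polynomial (ZMod (p ^ n))) (hf : f.Monic) (hdeg : f.natDegree = m)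
    (hirr : Irreducible (f.map (ZMod.castHom (dvd_pow_self p hn.ne') (ZMod p))))
    (ρ : Polynomial (AdjoinRoot f)) (hρ : ρ.Monic) (hρdeg : ρ.natDegree = l)
    (hρirr : Irreducible
      (ρ.map (Ideal.Quotient.mk (Ideal.span {(p : AdjoinRoot f)}))))
    (b : Module.Basis (Fin l) (AdjoinRoot f) (AdjoinRoot ρ)) :
    ∃ bs : Fin l → AdjoinRoot ρ,
      (∀ i j, Algebra.trace (AdjoinRoot f) (AdjoinRoot ρ) (bs i * b j) =
        if i = j then 1 else 0) ∧
      (∀ bs' : Fin l → AdjoinRoot ρ,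
        (∀ i j, Algebra.trace (AdjoinRoot f) (AdjoinRoot ρ) (bs' i * b j) =
          if i = j then 1 else 0) → bs' = bs) ∧
      (∃ bdual : Module.Basis (Fin l) (AdjoinRoot f) (AdjoinRoot ρ), ∀ i, bdual i = bs i) ∧
      (∀ a : AdjoinRoot ρ,
        a = ∑ i, Algebra.trace (AdjoinRoot f) (AdjoinRoot ρ) (bs i * a) • b i) :=
  galois_ring_trace_dual_basis_general p n l hp hn f hf hirr ρ hρirr b
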